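/- Let U ⊂ ℝⁿ be a bounded open domain with C¹ boundary. For every vector field q⃗ ∈ divBV(U) and every function f ∈ C¹(Ū), the vector field f q⃗ belongs to divBV(U) and its normal trace satisfies γ_ν(f q⃗) = f · γ_ν q⃗ as elements of (C¹(∂U))', i.e. ⟨γ_ν(f q⃗), Y⟩ = ⟨γ_ν q⃗, f Y⟩ for all Y ∈ C¹(∂U). -/

import Mathlib

open MeasureTheory Metric Set Filter Topology
open scoped Pointwise ENNReal NNReal

noncomputable section

abbrev Euc (n : ℕ) := EuclideanSpace ℝ (Fin n)

/-- Integral of a real function against a signed measure. -/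
def sInt {α : Type*} [MeasurableSpace α] (μ : MeasureTheory.SignedMeasure α) (f : α → ℝ) : ℝ :=
  ∫ x, f x ∂μ.toJordanDecomposition.posPart - ∫ x, f x ∂μ.toJordanDecomposition.negPart

/-- A signed measure is concentrated on the set `S`. -/
def SuppOn {α : Type*} [MeasurableSpace α] (μ : MeasureTheory.SignedMeasure α) (S : Set α) : Prop :=
  ∀ t : Set α, MeasurableSet t → t ∩ S = ∅ → μ t = 0

/-- Total variation mass of a finite family of signed measures, seen as a vector measure,
via duality against continuous fields of pointwise Euclidean norm at most one. -/
def vmass {α : Type*} [MeasurableSpace α] [TopologicalSpace α] {ι : Type*} [Fintype ι]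
    (g : ι → MeasureTheory.SignedMeasure α) : ℝ :=
  sSup { r | ∃ Y : ι → α → ℝ, (∀ i, Continuous (Y i)) ∧ (∀ x, ∑ i, (Y i x) ^ 2 ≤ 1) ∧
      r = ∑ i, sInt (g i) (Y i) }

/-- `j`-th partial derivative. -/
def pd {n : ℕ} (j : Fin n) (ψ : Euc n → ℝ) (x : Euc n) : ℝ :=
  fderiv ℝ ψ x (EuclideanSpace.single j 1)

/-- Smooth test function compactly supported in `U`. -/
def IsTestFun {n : ℕ} (U : Set (Euc n)) (ψ : Euc n → ℝ) : Prop :=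
  ContDiff ℝ (⊤ : ℕ∞) ψ ∧ HasCompactSupport ψ ∧ tsupport ψ ⊆ U

/-- A `C¹` function with compact support (representing an element of `C¹(Ū)`). -/
def IsC1 {n : ℕ} (Y : Euc n → ℝ) : Prop := ContDiff ℝ 1 Y ∧ HasCompactSupport Y

/-- A symmetric Div-BV tensor on `U`: the entries and the row-wise distributional
divergence are finite (signed) Radon measures carried by `U`. -/
structure DivBV (n : ℕ) (U : Set (Euc n)) where
  A : Fin n → Fin n → MeasureTheory.SignedMeasure (Euc n)
  divA : Fin n → MeasureTheory.SignedMeasure (Euc n)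
  symm : ∀ i j, A i j = A j i
  suppA : ∀ i j, SuppOn (A i j) U
  suppDiv : ∀ i, SuppOn (divA i) U
  weak : ∀ i, ∀ ψ : Euc n → ℝ, IsTestFun U ψ →
    ∑ j, sInt (A i j) (pd j ψ) = - sInt (divA i) ψ

/-- Positive semi-definiteness of a matrix of measures. -/
def DivBV.PSD {n : ℕ} {U : Set (Euc n)} (T : DivBV n U) : Prop :=
  ∀ ξ : Fin n → ℝ, ∀ s : Set (Euc n), MeasurableSet s →
    0 ≤ ∑ i, ∑ j, ξ i * ξ j * (T.A i j) s

/-- Density (Radon–Nikodym derivative w.r.t. Lebesgue) of a signed measure. -/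
def sdens {n : ℕ} (μ : MeasureTheory.SignedMeasure (Euc n)) (x : Euc n) : ℝ :=
  (μ.toJordanDecomposition.posPart.rnDeriv volume x).toReal -
  (μ.toJordanDecomposition.negPart.rnDeriv volume x).toReal

/-- Pointwise determinant of the absolutely continuous part of a Div-BV tensor. -/
def DivBV.detDens {n : ℕ} {U : Set (Euc n)} (T : DivBV n U) (x : Euc n) : ℝ :=
  Matrix.det (Matrix.of fun i j => sdens (T.A i j) x)

/-- Total mass `‖A‖_{M(U)}` of the tensor. -/
def DivBV.massA {n : ℕ} {U : Set (Euc n)} (T : DivBV n U) : ℝ :=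
  vmass (fun p : Fin n × Fin n => T.A p.1 p.2)

/-- Total mass `‖Div A‖_{M(U)}` of the divergence. -/
def DivBV.massDiv {n : ℕ} {U : Set (Euc n)} (T : DivBV n U) : ℝ :=
  vmass T.divA

/-- The pairing `⟨A, ∇Y⟩_U + ⟨Div A, Y⟩_U` defining the normal trace `γ_ν A`. -/
def DivBV.tracePair {n : ℕ} {U : Set (Euc n)} (T : DivBV n U) (Y : Fin n → Euc n → ℝ) : ℝ :=
  (∑ i, ∑ j, sInt (T.A i j) (pd j (Y i))) + ∑ i, sInt (T.divA i) (Y i)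

/-- The normal trace `γ_ν A` is represented by the vector-valued measure `g` on `∂U`. -/
def DivBV.TraceMeas {n : ℕ} {U : Set (Euc n)} (T : DivBV n U)
    (g : Fin n → MeasureTheory.SignedMeasure (Euc n)) : Prop :=
  (∀ i, SuppOn (g i) (frontier U)) ∧
  ∀ Y : Fin n → Euc n → ℝ, (∀ i, IsC1 (Y i)) →
    T.tracePair Y = ∑ i, sInt (g i) (Y i)

/-- The tangential part `γ_ν^τ A` of the normal trace is represented by the
vector-valued measure `g` on `∂U` (with outer unit normal field `ν`): `g` is carried by `∂U`,
is tangential, and represents the trace pairing against all `C¹` fields tangential along `∂U`. -/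
def DivBV.TangTraceMeas {n : ℕ} {U : Set (Euc n)} (T : DivBV n U) (ν : Euc n → Euc n)
    (g : Fin n → MeasureTheory.SignedMeasure (Euc n)) : Prop :=
  (∀ i, SuppOn (g i) (frontier U)) ∧
  (∀ φ : Euc n → ℝ, Continuous φ → ∑ i, sInt (g i) (fun x => φ x * ν x i) = 0) ∧
  ∀ Y : Fin n → Euc n → ℝ, (∀ i, IsC1 (Y i)) →
    (∀ x ∈ frontier U, ∑ i, Y i x * ν x i = 0) →
    T.tracePair Y = ∑ i, sInt (g i) (Y i)

/-- A domain whose boundary is a `C^k` hypersurface, presented by a defining function. -/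
structure CkDomain (n k : ℕ) (U : Set (Euc n)) where
  f : Euc n → ℝ
  O : Set (Euc n)
  opO : IsOpen O
  front : frontier U ⊆ O
  smooth : ContDiffOn ℝ k f O
  grad_ne : ∀ x ∈ frontier U, gradient f x ≠ 0
  neg : ∀ x ∈ O ∩ U, f x < 0
  pos : ∀ x ∈ O \ closure U, 0 < f x
  zero : ∀ x ∈ frontier U, f x = 0

/-- The outer unit normal field (normalized gradient of the defining function). -/
def CkDomain.nu {n k : ℕ} {U : Set (Euc n)} (B : CkDomain n k U) (x : Euc n) : Euc n :=
  ‖gradient B.f x‖⁻¹ • gradient B.f x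

/-- `L(Σ)`: the largest `L` such that every point at distance `< L` of `Σ` has a unique
nearest point on `Σ`. -/
def uniqRadius {n : ℕ} (S : Set (Euc n)) : ℝ :=
  sSup { L : ℝ | 0 ≤ L ∧ ∀ x : Euc n, infDist x S < L →
    ∃! a, a ∈ S ∧ dist x a = infDist x S }

open Classical in
/-- Nearest-point projection on `S` (junk value if no nearest point exists). -/
def nearestPt {n : ℕ} (S : Set (Euc n)) (x : Euc n) : Euc n :=
  if h : ∃ a, a ∈ S ∧ dist x a = infDist x S then h.choose else x

/-- The geometric extension `ν ∘ π_Σ` of the unit normal to a tubular neighbourhood. -/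
def CkDomain.nuGeo {n k : ℕ} {U : Set (Euc n)} (B : CkDomain n k U) (x : Euc n) : Euc n :=
  B.nu (nearestPt (frontier U) x)

/-- `K(Σ) = max (1/L(Σ), L(Σ) ‖D²ν‖_∞)`. -/
def CkDomain.Kconst {n k : ℕ} {U : Set (Euc n)} (B : CkDomain n k U) : ℝ :=
  max (uniqRadius (frontier U))⁻¹
    (uniqRadius (frontier U) *
      sSup ((fun a => ‖fderiv ℝ (fderiv ℝ B.nuGeo) a‖) '' frontier U))

/-- The reflection `σ(x) = 2π_Σ(x) − x` across `Σ`. -/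
def reflAcross {n : ℕ} (S : Set (Euc n)) (x : Euc n) : Euc n :=
  (2 : ℝ) • nearestPt S x - x

/-! The candidate for `div (f q)` is the measure `f div q + ∇f · q`; it is finite because `q` and
`div q` are carried by the compact set `Ū`, on which `f` and `∇f` are bounded. Against a compactly
supported `C¹` function `Y`, the product rule `∂ᵢ(f Y) = f ∂ᵢY + ∂ᵢf Y` turns
`⟨q, ∇(f Y)⟩ + ⟨div q, f Y⟩` into `⟨f q, ∇Y⟩ + ⟨f div q + ∇f · q, Y⟩`, which is the trace identity.
Taking `Y = ψ` a test function gives the distributional identity, once the weak formula for `q` is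
extended from smooth test functions to the merely `C¹` function `f ψ`: mollify, and use that
integration against a finite measure is continuous for uniform convergence. -/

section SignedMeasure

variable {α : Type*} [MeasurableSpace α]

lemma SuppOn.mono {μ : SignedMeasure α} {S T : Set α} (hμ : SuppOn μ S) (hST : S ⊆ T) :
    SuppOn μ T := fun t ht htT =>
  hμ t ht (Set.eq_empty_of_subset_empty (htT ▸ Set.inter_subset_inter_right t hST))

lemma SuppOn.add {μ ν : SignedMeasure α} {S : Set α} (hμ : SuppOn μ S) (hν : SuppOn ν S) :
    SuppOn (μ + ν) S := fun t ht htS => by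
  rw [_root_.add_apply, hμ t ht htS, hν t ht htS, add_zero]

lemma SuppOn.sum {ι : Type*} (s : Finset ι) {μ : ι → SignedMeasure α} {S : Set α}
    (hμ : ∀ i ∈ s, SuppOn (μ i) S) : SuppOn (∑ i ∈ s, μ i) S := by
  classical
  induction s using Finset.induction_on with
  | empty => intro t _ _; simp
  | insert i s hi ih =>
    rw [Finset.sum_insert hi]
    exact (hμ i (Finset.mem_insert_self i s)).add
      (ih fun j hj => hμ j (Finset.mem_insert_of_mem hj))

lemma SuppOn.posPart_apply_eq_zero {μ : SignedMeasure α} {S t : Set α} (hμ : SuppOn μ S)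
    (ht : MeasurableSet t) (htS : t ∩ S = ∅) : μ.toJordanDecomposition.posPart t = 0 := by
  obtain ⟨i, hi, hpos, -, hP, -⟩ := μ.toJordanDecomposition_spec
  have hzero : μ (i ∩ t) = 0 := hμ _ (hi.inter ht)
    (Set.eq_empty_of_subset_empty (htS ▸ Set.inter_subset_inter_left S Set.inter_subset_right))
  simp [hP, SignedMeasure.toMeasureOfZeroLE_apply _ hpos hi ht, hzero]

lemma SuppOn.negPart_apply_eq_zero {μ : SignedMeasure α} {S t : Set α} (hμ : SuppOn μ S)
    (ht : MeasurableSet t) (htS : t ∩ S = ∅) : μ.toJordanDecomposition.negPart t = 0 := by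
  obtain ⟨i, hi, -, hneg, -, hN⟩ := μ.toJordanDecomposition_spec
  have hzero : μ (iᶜ ∩ t) = 0 := hμ _ (hi.compl.inter ht)
    (Set.eq_empty_of_subset_empty (htS ▸ Set.inter_subset_inter_left S Set.inter_subset_right))
  simp [hN, SignedMeasure.toMeasureOfLEZero_apply _ hneg hi.compl ht, hzero]

lemma sInt_zero (g : α → ℝ) : sInt (0 : SignedMeasure α) g = 0 := by
  simp [sInt, SignedMeasure.toJordanDecomposition_zero]

lemma abs_sInt_le (μ : SignedMeasure α) {u : α → ℝ} {C : ℝ} (hu : ∀ x, |u x| ≤ C) :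
    |sInt μ u| ≤ μ.totalVariation.real Set.univ * C := by
  have hbound : ∀ (ν : Measure α) [IsFiniteMeasure ν], |∫ x, u x ∂ν| ≤ C * ν.real Set.univ :=
    fun ν _ => by
      simpa only [Real.norm_eq_abs] using norm_integral_le_of_norm_le_const (μ := ν) (f := u)
        (Eventually.of_forall fun x => by simpa only [Real.norm_eq_abs] using hu x)
  have h₁ := hbound μ.toJordanDecomposition.posPart
  have h₂ := hbound μ.toJordanDecomposition.negPart
  rw [SignedMeasure.totalVariation, measureReal_add_apply]
  unfold sInt
  exact (abs_sub _ _).trans (by linarith)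

def MeasureTheory.SignedMeasure.withDensityᵥ (μ : SignedMeasure α) (u : α → ℝ) : SignedMeasure α :=
  μ.toJordanDecomposition.posPart.withDensityᵥ u - μ.toJordanDecomposition.negPart.withDensityᵥ u

lemma SuppOn.withDensityᵥ {μ : SignedMeasure α} {S : Set α}
    (hμ : SuppOn μ S) (u : α → ℝ) : SuppOn (μ.withDensityᵥ u) S := by
  have hnull : ∀ (ν : Measure α) {t : Set α}, MeasurableSet t → ν t = 0 →
      ν.withDensityᵥ u t = 0 := fun ν t ht hνt =>
    Measure.withDensityᵥ_absolutelyContinuous ν u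
      (by rw [Measure.toENNRealVectorMeasure_apply_measurable ht, hνt])
  intro t ht htS
  rw [SignedMeasure.withDensityᵥ, _root_.sub_apply, hnull _ ht (hμ.posPart_apply_eq_zero ht htS),
    hnull _ ht (hμ.negPart_apply_eq_zero ht htS), sub_zero]

end SignedMeasure

section SignedIntegral

variable {α : Type*} [MeasurableSpace α] [TopologicalSpace α] [OpensMeasurableSpace α]
  {g : α → ℝ}

lemma Continuous.integrable_of_hasCompactSupport_of_isFiniteMeasure (hg : Continuous g)
    (hgc : HasCompactSupport g) (μ : Measure α) [IsFiniteMeasure μ] : Integrable g μ :=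
  have : IsFiniteMeasureOnCompacts μ := ⟨fun _ _ => measure_lt_top μ _⟩
  hg.integrable_of_hasCompactSupport (μ := μ) hgc

lemma integrable_of_measure_compl_eq_zero [T2Space α] {μ : Measure α} [IsFiniteMeasure μ]
    {K : Set α} (hK : IsCompact K) (hμK : μ Kᶜ = 0) {u : α → ℝ} (hu : ContinuousOn u K) :
    Integrable u μ := by
  have : IsFiniteMeasureOnCompacts μ := ⟨fun _ _ => measure_lt_top μ _⟩
  have hae : ∀ᵐ x ∂μ, x ∈ K := hμK
  simpa [IntegrableOn, Measure.restrict_eq_self_of_ae_mem hae] using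
    hu.integrableOn_compact (μ := μ) hK

lemma sInt_eq_integral_sub_integral {μ : SignedMeasure α} {P N : Measure α} [IsFiniteMeasure P]
    [IsFiniteMeasure N] (h : μ = P.toSignedMeasure - N.toSignedMeasure) (hg : Continuous g)
    (hgc : HasCompactSupport g) : sInt μ g = ∫ x, g x ∂P - ∫ x, g x ∂N := by
  have hint := hg.integrable_of_hasCompactSupport_of_isFiniteMeasure hgc
  have hJ : μ.toJordanDecomposition.posPart + N = μ.toJordanDecomposition.negPart + P := by
    rw [← Measure.toSignedMeasure_eq_toSignedMeasure_iff, Measure.toSignedMeasure_add,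
      Measure.toSignedMeasure_add, add_comm _ P.toSignedMeasure, ← sub_eq_sub_iff_add_eq_add, ← h]
    exact μ.toSignedMeasure_toJordanDecomposition
  have hJg := congrArg (fun ν => ∫ x, g x ∂ν) hJ
  simp only [integral_add_measure (hint _) (hint _)] at hJg
  unfold sInt
  linarith

lemma sInt_add_measure (μ ν : SignedMeasure α) (hg : Continuous g) (hgc : HasCompactSupport g) :
    sInt (μ + ν) g = sInt μ g + sInt ν g := by
  have hint := hg.integrable_of_hasCompactSupport_of_isFiniteMeasure hgc
  rw [sInt_eq_integral_sub_integral
    (P := μ.toJordanDecomposition.posPart + ν.toJordanDecomposition.posPart)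
    (N := μ.toJordanDecomposition.negPart + ν.toJordanDecomposition.negPart) ?_ hg hgc,
    integral_add_measure (hint _) (hint _), integral_add_measure (hint _) (hint _)]
  · unfold sInt
    ring
  · conv_lhs => rw [← μ.toSignedMeasure_toJordanDecomposition,
      ← ν.toSignedMeasure_toJordanDecomposition]
    simp only [JordanDecomposition.toSignedMeasure, Measure.toSignedMeasure_add]
    abel

lemma sInt_sub_measure (μ ν : SignedMeasure α) (hg : Continuous g) (hgc : HasCompactSupport g) :
    sInt (μ - ν) g = sInt μ g - sInt ν g := by
  have hint := hg.integrable_of_hasCompactSupport_of_isFiniteMeasure hgc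
  rw [sInt_eq_integral_sub_integral
    (P := μ.toJordanDecomposition.posPart + ν.toJordanDecomposition.negPart)
    (N := μ.toJordanDecomposition.negPart + ν.toJordanDecomposition.posPart) ?_ hg hgc,
    integral_add_measure (hint _) (hint _), integral_add_measure (hint _) (hint _)]
  · unfold sInt
    ring
  · conv_lhs => rw [← μ.toSignedMeasure_toJordanDecomposition,
      ← ν.toSignedMeasure_toJordanDecomposition]
    simp only [JordanDecomposition.toSignedMeasure, Measure.toSignedMeasure_add]
    abel

lemma sInt_finset_sum_measure {ι : Type*} (s : Finset ι) (μ : ι → SignedMeasure α)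
    (hg : Continuous g) (hgc : HasCompactSupport g) :
    sInt (∑ i ∈ s, μ i) g = ∑ i ∈ s, sInt (μ i) g := by
  classical
  induction s using Finset.induction_on with
  | empty => simp [sInt_zero]
  | insert i s hi ih => rw [Finset.sum_insert hi, sInt_add_measure _ _ hg hgc, ih,
      Finset.sum_insert hi]

lemma sInt_add (μ : SignedMeasure α) {a b : α → ℝ} (ha : Continuous a) (hac : HasCompactSupport a)
    (hb : Continuous b) (hbc : HasCompactSupport b) :
    sInt μ (fun x => a x + b x) = sInt μ a + sInt μ b := by
  have hia := ha.integrable_of_hasCompactSupport_of_isFiniteMeasure hac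
  have hib := hb.integrable_of_hasCompactSupport_of_isFiniteMeasure hbc
  simp only [sInt, integral_add (hia _) (hib _)]
  ring

lemma sInt_sub (μ : SignedMeasure α) {a b : α → ℝ} (ha : Continuous a) (hac : HasCompactSupport a)
    (hb : Continuous b) (hbc : HasCompactSupport b) :
    sInt μ (fun x => a x - b x) = sInt μ a - sInt μ b := by
  have hia := ha.integrable_of_hasCompactSupport_of_isFiniteMeasure hac
  have hib := hb.integrable_of_hasCompactSupport_of_isFiniteMeasure hbc
  simp only [sInt, integral_sub (hia _) (hib _)]
  ring

lemma sInt_measure_withDensityᵥ (ν : Measure α) [IsFiniteMeasure ν] {u : α → ℝ}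
    (hu : Integrable u ν) (hg : Continuous g) (hgc : HasCompactSupport g) :
    sInt (ν.withDensityᵥ u) g = ∫ x, u x * g x ∂ν := by
  obtain ⟨C, hC⟩ := hg.bounded_above_of_compact_support hgc
  have hmul : ∀ v : α → ℝ, Integrable v ν → Integrable (fun x => v x * g x) ν := fun v hv =>
    hv.mul_bdd hg.aestronglyMeasurable (Eventually.of_forall hC)
  have hdens : ∀ v : α → ℝ, Integrable v ν →
      ∫ x, g x ∂ν.withDensity (fun x => ENNReal.ofReal (v x)) = ∫ x, max (v x) 0 * g x ∂ν :=
    fun v hv => integral_withDensity_eq_integral_toReal_smul₀ hv.aemeasurable.ennreal_ofReal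
      (Eventually.of_forall fun _ => ENNReal.ofReal_lt_top) g
  have := isFiniteMeasure_withDensity_ofReal hu.2
  have := isFiniteMeasure_withDensity_ofReal hu.fun_neg.2
  rw [sInt_eq_integral_sub_integral
      (withDensityᵥ_eq_withDensity_pos_part_sub_withDensity_neg_part hu) hg hgc,
    hdens u hu, hdens _ hu.fun_neg,
    ← integral_sub (hmul _ hu.pos_part) (hmul _ hu.fun_neg.pos_part)]
  congr 1 with x
  rcases le_total 0 (u x) with h | h <;> simp [h]

lemma sInt_withDensityᵥ (μ : SignedMeasure α) {u : α → ℝ}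
    (hu₁ : Integrable u μ.toJordanDecomposition.posPart)
    (hu₂ : Integrable u μ.toJordanDecomposition.negPart) (hg : Continuous g)
    (hgc : HasCompactSupport g) :
    sInt (μ.withDensityᵥ u) g = sInt μ (fun x => u x * g x) := by
  rw [SignedMeasure.withDensityᵥ, sInt_sub_measure _ _ hg hgc,
    sInt_measure_withDensityᵥ _ hu₁ hg hgc, sInt_measure_withDensityᵥ _ hu₂ hg hgc, sInt]

lemma SuppOn.sInt_withDensityᵥ [T2Space α] {μ : SignedMeasure α} {K : Set α} (hμ : SuppOn μ K)
    (hK : IsCompact K) {u : α → ℝ} (hu : ContinuousOn u K) (hg : Continuous g)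
    (hgc : HasCompactSupport g) :
    sInt (μ.withDensityᵥ u) g = sInt μ (fun x => u x * g x) := by
  have hKc : Kᶜ ∩ K = ∅ := compl_inter_self K
  exact _root_.sInt_withDensityᵥ μ
    (integrable_of_measure_compl_eq_zero hK
      (hμ.posPart_apply_eq_zero hK.measurableSet.compl hKc) hu)
    (integrable_of_measure_compl_eq_zero hK
      (hμ.negPart_apply_eq_zero hK.measurableSet.compl hKc) hu) hg hgc

end SignedIntegral

section PartialDerivatives

variable {n : ℕ}

lemma continuous_pd {h : Euc n → ℝ} (hh : ContDiff ℝ 1 h) (j : Fin n) : Continuous (pd j h) :=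
  (hh.continuous_fderiv one_ne_zero).clm_apply continuous_const

lemma HasCompactSupport.pd {h : Euc n → ℝ} (hcs : HasCompactSupport h) (j : Fin n) :
    HasCompactSupport (pd j h) :=
  hcs.fderiv_apply ℝ _

lemma pd_mul {f h : Euc n → ℝ} (hf : ContDiff ℝ 1 f) (hh : ContDiff ℝ 1 h) (j : Fin n)
    (x : Euc n) : pd j (fun y => f y * h y) x = f x * pd j h x + pd j f x * h x := by
  rw [pd, fderiv_fun_mul (hf.differentiable one_ne_zero).differentiableAt
    (hh.differentiable one_ne_zero).differentiableAt]
  simp only [add_apply, FunLike.coe_smul, Pi.smul_apply,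
    smul_eq_mul, pd]
  ring

lemma abs_pd_sub_pd_le (h : Euc n → ℝ) (j : Fin n) (x y : Euc n) :
    |pd j h y - pd j h x| ≤ ‖fderiv ℝ h y - fderiv ℝ h x‖ := by
  simpa [pd, ← Real.norm_eq_abs] using
    (fderiv ℝ h y - fderiv ℝ h x).le_opNorm (EuclideanSpace.single j 1)

open scoped Convolution in
lemma exists_isTestFun_near {U : Set (Euc n)} (hU : IsOpen U) {h : Euc n → ℝ}
    (hh : ContDiff ℝ 1 h) (hcs : HasCompactSupport h) (hsub : tsupport h ⊆ U) {η : ℝ}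
    (hη : 0 < η) :
    ∃ ψ, IsTestFun U ψ ∧ (∀ x, |ψ x - h x| ≤ η) ∧ ∀ j x, |pd j ψ x - pd j h x| ≤ η := by
  obtain ⟨δ, hδ, hδU⟩ := hcs.exists_cthickening_subset_open hU hsub
  obtain ⟨ε₁, hε₁, hh_uc⟩ := Metric.uniformContinuous_iff.mp
    (hcs.uniformContinuous_of_continuous hh.continuous) η hη
  obtain ⟨ε₂, hε₂, hDh_uc⟩ := Metric.uniformContinuous_iff.mp
    ((hcs.fderiv ℝ).uniformContinuous_of_continuous (hh.continuous_fderiv one_ne_zero)) η hη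
  set ε := min δ (min ε₁ ε₂)
  have hε : 0 < ε := lt_min hδ (lt_min hε₁ hε₂)
  let φ : ContDiffBump (0 : Euc n) := ⟨ε / 2, ε, half_pos hε, half_lt_self hε⟩
  have hloc : LocallyIntegrable (φ.normed volume) volume := φ.integrable_normed.locallyIntegrable
  have hclose : ∀ (k : Euc n → ℝ) (x : Euc n), Continuous k →
      (∀ y, dist y x < ε → |k y - k x| ≤ η) →
      |(φ.normed volume ⋆[ContinuousLinearMap.lsmul ℝ ℝ, volume] k) x - k x| ≤ η :=
    fun k x hk hkx => φ.dist_normed_convolution_le hk.aestronglyMeasurable fun y hy => hkx y hy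
  refine ⟨φ.normed volume ⋆[ContinuousLinearMap.lsmul ℝ ℝ, volume] h,
    ⟨φ.hasCompactSupport_normed.contDiff_convolution_left _ φ.contDiff_normed
      hh.continuous.locallyIntegrable, φ.hasCompactSupport_normed.convolution _ hcs, ?_⟩,
    fun x => hclose h x hh.continuous fun y hy => (hh_uc (hy.trans_le ?_)).le, fun j x => ?_⟩
  · calc tsupport (φ.normed volume ⋆[ContinuousLinearMap.lsmul ℝ ℝ, volume] h)
        ⊆ closure (Metric.ball 0 ε + tsupport h) := closure_mono <|
          (support_convolution_subset _).trans
            (Set.add_subset_add φ.support_normed_eq.subset (subset_tsupport h))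
      _ ⊆ cthickening ε (tsupport h) := by
          rw [ball_add_zero]; exact closure_thickening_subset_cthickening _ _
      _ ⊆ U := (cthickening_mono (min_le_left _ _) _).trans hδU
  · exact (min_le_right _ _).trans (min_le_left _ _)
  · rw [pd, (hcs.hasFDerivAt_convolution_right _ hloc hh x).fderiv,
      convolution_precompR_apply _ hloc (hcs.fderiv ℝ) (hh.continuous_fderiv one_ne_zero)]
    refine hclose _ x (continuous_pd hh j) fun y hy => (abs_pd_sub_pd_le h j x y).trans ?_
    rw [← dist_eq_norm]
    exact (hDh_uc (hy.trans_le ((min_le_right _ _).trans (min_le_right _ _)))).le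

end PartialDerivatives

section DivergenceOfProduct

variable {n : ℕ}

lemma sum_sInt_pd_eq_neg_sInt_of_contDiff_one {U : Set (Euc n)} (hU : IsOpen U)
    {q : Fin n → SignedMeasure (Euc n)} {dq : SignedMeasure (Euc n)}
    (hweak : ∀ ψ : Euc n → ℝ, IsTestFun U ψ → ∑ i, sInt (q i) (pd i ψ) = - sInt dq ψ)
    {h : Euc n → ℝ} (hh : ContDiff ℝ 1 h) (hcs : HasCompactSupport h) (hsub : tsupport h ⊆ U) :
    ∑ i, sInt (q i) (pd i h) = - sInt dq h := by
  set M := dq.totalVariation.real univ + ∑ i, (q i).totalVariation.real univ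
  have hM : 0 ≤ M := by positivity
  have hsmall : ∀ η > 0, |∑ i, sInt (q i) (pd i h) + sInt dq h| ≤ M * η := by
    intro η hη
    obtain ⟨ψ, hψ, hψh, hpdψ⟩ := exists_isTestFun_near hU hh hcs hsub hη
    have hψ1 : ContDiff ℝ 1 ψ := hψ.1.of_le (by exact_mod_cast le_top)
    have hdiff : ∑ i, sInt (q i) (pd i h) + sInt dq h =
        ∑ i, sInt (q i) (fun x => pd i h x - pd i ψ x) + sInt dq (fun x => h x - ψ x) := by
      simp only [sInt_sub _ (continuous_pd hh _) (hcs.pd _) (continuous_pd hψ1 _) (hψ.2.1.pd _),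
        sInt_sub _ hh.continuous hcs hψ1.continuous hψ.2.1, Finset.sum_sub_distrib]
      linarith [hweak ψ hψ]
    rw [hdiff]
    calc _ ≤ ∑ i, |sInt (q i) (fun x => pd i h x - pd i ψ x)| + |sInt dq (fun x => h x - ψ x)| :=
          (abs_add_le _ _).trans (add_le_add_left (Finset.abs_sum_le_sum_abs _ _) _)
      _ ≤ ∑ i, (q i).totalVariation.real univ * η + dq.totalVariation.real univ * η :=
          add_le_add (Finset.sum_le_sum fun i _ => abs_sInt_le _ fun x => by
            rw [abs_sub_comm]; exact hpdψ i x)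
            (abs_sInt_le _ fun x => by rw [abs_sub_comm]; exact hψh x)
      _ = M * η := by rw [← Finset.sum_mul]; ring
  have hzero : |∑ i, sInt (q i) (pd i h) + sInt dq h| ≤ 0 := le_of_forall_pos_le_add fun ε hε =>
    calc _ ≤ M * (ε / (M + 1)) := hsmall _ (by positivity)
      _ ≤ 0 + ε := by
        rw [zero_add, mul_div_assoc', div_le_iff₀ (by positivity)]
        nlinarith
  linarith [abs_nonpos_iff.mp hzero]

/-- `div (f q) = f div q + ∇f · q`, where `dq` stands for `div q`. -/
def divMul (f : Euc n → ℝ) (q : Fin n → SignedMeasure (Euc n)) (dq : SignedMeasure (Euc n)) :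
    SignedMeasure (Euc n) :=
  dq.withDensityᵥ f + ∑ i, (q i).withDensityᵥ (pd i f)

lemma SuppOn.divMul {S : Set (Euc n)} {q : Fin n → SignedMeasure (Euc n)}
    {dq : SignedMeasure (Euc n)} (hq : ∀ i, SuppOn (q i) S) (hdq : SuppOn dq S)
    (f : Euc n → ℝ) : SuppOn (divMul f q dq) S :=
  (hdq.withDensityᵥ f).add (SuppOn.sum _ fun i _ => (hq i).withDensityᵥ _)

lemma sInt_divMul {K : Set (Euc n)} (hK : IsCompact K) {q : Fin n → SignedMeasure (Euc n)}
    {dq : SignedMeasure (Euc n)} (hq : ∀ i, SuppOn (q i) K) (hdq : SuppOn dq K)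
    {f : Euc n → ℝ} (hf : ContDiff ℝ 1 f) {g : Euc n → ℝ} (hg : Continuous g)
    (hgc : HasCompactSupport g) :
    sInt (divMul f q dq) g =
      sInt dq (fun x => f x * g x) + ∑ i, sInt (q i) (fun x => pd i f x * g x) := by
  rw [divMul, sInt_add_measure _ _ hg hgc, sInt_finset_sum_measure _ _ hg hgc,
    hdq.sInt_withDensityᵥ hK hf.continuous.continuousOn hg hgc]
  simp only [fun i => (hq i).sInt_withDensityᵥ hK (continuous_pd hf i).continuousOn hg hgc]

lemma sInt_pd_mul (μ : SignedMeasure (Euc n)) {f h : Euc n → ℝ} (hf : ContDiff ℝ 1 f)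
    (hh : ContDiff ℝ 1 h) (hcs : HasCompactSupport h) (j : Fin n) :
    sInt μ (pd j (fun x => f x * h x)) =
      sInt μ (fun x => f x * pd j h x) + sInt μ (fun x => pd j f x * h x) := by
  rw [funext (pd_mul hf hh j)]
  exact sInt_add μ (hf.continuous.mul (continuous_pd hh j)) (hcs.pd j).mul_left
    ((continuous_pd hf j).mul hh.continuous) hcs.mul_left

lemma sum_sInt_mul_pd_add_sInt_divMul {K : Set (Euc n)} (hK : IsCompact K)
    {q : Fin n → SignedMeasure (Euc n)} {dq : SignedMeasure (Euc n)} (hq : ∀ i, SuppOn (q i) K)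
    (hdq : SuppOn dq K) {f : Euc n → ℝ} (hf : ContDiff ℝ 1 f) {h : Euc n → ℝ}
    (hh : ContDiff ℝ 1 h) (hcs : HasCompactSupport h) :
    (∑ i, sInt (q i) (fun x => f x * pd i h x)) + sInt (divMul f q dq) h =
      (∑ i, sInt (q i) (pd i (fun x => f x * h x))) + sInt dq (fun x => f x * h x) := by
  rw [sInt_divMul hK hq hdq hf hh.continuous hcs]
  simp only [sInt_pd_mul _ hf hh hcs, Finset.sum_add_distrib]
  ring

end DivergenceOfProduct

theorem stmt14_general (n : ℕ) (U : Set (Euc n)) (hU : IsOpen U)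
    (hb : Bornology.IsBounded U)
    (q : Fin n → MeasureTheory.SignedMeasure (Euc n)) (dq : MeasureTheory.SignedMeasure (Euc n))
    (hsupp : ∀ i, SuppOn (q i) U) (hds : SuppOn dq U)
    (hweak : ∀ ψ : Euc n → ℝ, IsTestFun U ψ →
      ∑ i, sInt (q i) (pd i ψ) = - sInt dq ψ)
    (f : Euc n → ℝ) (hf : ContDiff ℝ 1 f) :
    ∃ dm : MeasureTheory.SignedMeasure (Euc n),
      SuppOn dm U ∧
      -- `dm = div (f q)` in the sense of distributions: `f q` is div-BV
      (∀ ψ : Euc n → ℝ, IsTestFun U ψ →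
        ∑ i, sInt (q i) (fun x => f x * pd i ψ x) = - sInt dm ψ) ∧
      -- `⟨γ_ν(f q), Y⟩ = ⟨γ_ν q, f Y⟩` for every `Y ∈ C¹(Ū)`
      (∀ Y : Euc n → ℝ, IsC1 Y →
        (∑ i, sInt (q i) (fun x => f x * pd i Y x)) + sInt dm Y =
          (∑ i, sInt (q i) (pd i (fun x => f x * Y x))) +
            sInt dq (fun x => f x * Y x)) := by
  have htrace (Y : Euc n → ℝ) (hY : ContDiff ℝ 1 Y) (hYc : HasCompactSupport Y) :=
    sum_sInt_mul_pd_add_sInt_divMul hb.isCompact_closure (fun i => (hsupp i).mono subset_closure)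
      (hds.mono subset_closure) hf hY hYc
  refine ⟨divMul f q dq, SuppOn.divMul hsupp hds f, fun ψ hψ => ?_, fun Y hY => htrace Y hY.1 hY.2⟩
  have hψ1 : ContDiff ℝ 1 ψ := hψ.1.of_le (by exact_mod_cast le_top)
  have hfψ := sum_sInt_pd_eq_neg_sInt_of_contDiff_one hU hweak (hf.mul hψ1) hψ.2.1.mul_left
    ((closure_mono (Function.support_mul_subset_right _ _)).trans hψ.2.2)
  linarith [htrace ψ hψ1 hψ.2.1]

/-- Appendix A, formula (A.2): for `q ∈ divBV(U)` and `f ∈ C¹(Ū)`,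
the field `f q` is div-BV and `γ_ν(f q) = f γ_ν q`. -/
theorem stmt14 (n : ℕ) (U : Set (Euc n)) (hU : IsOpen U)
    (hb : Bornology.IsBounded U) (hne : U.Nonempty) (B : CkDomain n 1 U)
    (q : Fin n → MeasureTheory.SignedMeasure (Euc n)) (dq : MeasureTheory.SignedMeasure (Euc n))
    (hsupp : ∀ i, SuppOn (q i) U) (hds : SuppOn dq U)
    (hweak : ∀ ψ : Euc n → ℝ, IsTestFun U ψ →
      ∑ i, sInt (q i) (pd i ψ) = - sInt dq ψ)
    (f : Euc n → ℝ) (hf : ContDiff ℝ 1 f) :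
    ∃ dm : MeasureTheory.SignedMeasure (Euc n),
      SuppOn dm U ∧
      -- `dm = div (f q)` in the sense of distributions: `f q` is div-BV
      (∀ ψ : Euc n → ℝ, IsTestFun U ψ →
        ∑ i, sInt (q i) (fun x => f x * pd i ψ x) = - sInt dm ψ) ∧
      -- `⟨γ_ν(f q), Y⟩ = ⟨γ_ν q, f Y⟩` for every `Y ∈ C¹(Ū)`
      (∀ Y : Euc n → ℝ, IsC1 Y →
        (∑ i, sInt (q i) (fun x => f x * pd i Y x)) + sInt dm Y =
          (∑ i, sInt (q i) (pd i (fun x => f x * Y x))) +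
            sInt dq (fun x => f x * Y x)) :=
  stmt14_general n U hU hb q dq hsupp hds hweak f hf
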